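/- Let p be prime, k∈ℕ, and H the unique subgroup of order gcd(k,p-1) of Gal(ℚ(ζ_p)/ℚ) ≅ (ℤ/pℤ)*. Then i^k·x_k(r;p) lies in the fixed field ℚ(ζ_p)^H for every integer r. -/

import Mathlib

open scoped Real

noncomputable def xk (k p : ℕ) [NeZero p] (r : ZMod p) : ℝ :=
  ((p : ℝ))⁻¹ ^ k *
    ∑ m ∈ Finset.univ.filter (fun m : Fin k → (ZMod p)ˣ => ∏ i, ((m i : ZMod p)) = r),
      ∏ i, Real.cot (π * ((m i : ZMod p).val : ℝ) / p)

/-- The `k`-fold divisor function. -/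
def dk (k n : ℕ) : ℕ :=
  ((Fintype.piFinset fun _ : Fin k => Finset.range (n + 1)).filter
    (fun f => ∏ i, f i = n)).card

/-!
Since `i cot (π n / p) = (ζ ^ n + 1) / (1 - ζ ^ n)` for `ζ = exp (2 π i / p)`, the number
`i ^ k x_k(r; p)` is `p ^ (-k)` times a rational expression in `ζ`, a sum over the tuples
`(m_1, …, m_k)` of units with product `r`. The automorphism `ζ ↦ ζ ^ a` maps the term of `m` to
the term of `a m`, and when `a ^ k = 1` the tuple `a m` again has product `r`, so it only permutes
the sum. Every element of `H` has order dividing `gcd(k, p - 1)`, hence `k`.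
-/

open Finset

/-- `p ^ k i ^ k x_k(r; p)` as a rational function of `ζ = exp (2 π i / p)`, over any field. -/
noncomputable def cotSum {F : Type*} [Field F] (k p : ℕ) [NeZero p] (r : ZMod p) (ζ : F) : F :=
  ∑ m ∈ univ.filter (fun m : Fin k → (ZMod p)ˣ => ∏ i, (m i : ZMod p) = r),
    ∏ i, (ζ ^ (m i : ZMod p).val + 1) / (1 - ζ ^ (m i : ZMod p).val)

lemma map_cotSum {F G : Type*} [Field F] [Field G] (f : F →+* G) (k p : ℕ) [NeZero p] (r : ZMod p)
    (ζ : F) : f (cotSum k p r ζ) = cotSum k p r (f ζ) := by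
  simp [cotSum]

lemma Complex.I_mul_cot_pi_mul (z : ℂ) :
    I * cot (π * z) = (exp (2 * π * I * z) + 1) / (1 - exp (2 * π * I * z)) := by
  rw [cot_pi_eq_exp_ratio, mul_div_assoc', mul_div_mul_left _ _ I_ne_zero]

lemma I_pow_mul_xk (k p : ℕ) [NeZero p] (r : ZMod p) :
    Complex.I ^ k * (xk k p r : ℂ) =
      ((p : ℂ)⁻¹) ^ k * cotSum k p r (Complex.exp (2 * π * Complex.I / p)) := by
  simp only [xk, cotSum, Complex.ofReal_mul, Complex.ofReal_pow, Complex.ofReal_inv,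
    Complex.ofReal_natCast, Complex.ofReal_sum, Complex.ofReal_prod, mul_sum]
  refine sum_congr rfl fun m _ => ?_
  rw [mul_left_comm, ← Fin.prod_const k Complex.I, ← prod_mul_distrib]
  congr 1
  refine prod_congr rfl fun i _ => ?_
  rw [Complex.ofReal_cot, ← Complex.exp_nat_mul]
  push_cast
  rw [mul_div_assoc, Complex.I_mul_cot_pi_mul]
  ring_nf

lemma cotSum_pow_val {F : Type*} [Field F] (k p : ℕ) [NeZero p] (r : ZMod p) {ζ : F}
    (hζ : ζ ^ p = 1) {a : (ZMod p)ˣ} (ha : a ^ k = 1) :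
    cotSum k p r (ζ ^ (a : ZMod p).val) = cotSum k p r ζ := by
  have hpow (u : (ZMod p)ˣ) : (ζ ^ (a : ZMod p).val) ^ (u : ZMod p).val =
      ζ ^ ((a * u : (ZMod p)ˣ) : ZMod p).val := by
    rw [← pow_mul, pow_eq_pow_mod _ hζ, Units.val_mul, ZMod.val_mul]
  unfold cotSum
  refine sum_equiv (Equiv.mulLeft fun _ => a) (fun m => ?_) (fun m _ => by simp [hpow])
  simp [prod_mul_distrib, ← Units.val_pow_eq_pow_val, ha]

lemma pow_eq_one_of_mem_of_card_dvd {G : Type*} [Group G] {H : Subgroup G} {k : ℕ}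
    (hH : Nat.card H ∣ k) {g : G} (hg : g ∈ H) : g ^ k = 1 := by
  obtain ⟨c, rfl⟩ := hH
  rw [pow_mul, ← H.coe_mk g hg, ← Subgroup.coe_pow, pow_card_eq_one', H.coe_one, one_pow]

lemma IsPrimitiveRoot.algEquiv_cotSum {L : Type*} [Field L] [Algebra ℚ L] {k p : ℕ} [NeZero p]
    (r : ZMod p) {ζ : L} (hζ : IsPrimitiveRoot ζ p) {σ : L ≃ₐ[ℚ] L} (hσ : σ ^ k = 1) :
    σ (cotSum k p r ζ) = cotSum k p r ζ := by
  rw [show σ (cotSum k p r ζ) = cotSum k p r (σ ζ) from map_cotSum (σ : L →+* L) k p r ζ,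
    ← hζ.autToPow_spec ℚ σ, cotSum_pow_val k p r hζ.pow_eq_one (by rw [← map_pow, hσ, map_one])]

theorem stmt4_general (p k : ℕ) [NeZero p] (r : ℤ)
    (K : IntermediateField ℚ ℂ)
    (hK : K = IntermediateField.adjoin ℚ {Complex.exp (2 * π * Complex.I / p)})
    (H : Subgroup (K ≃ₐ[ℚ] K)) (hH : Nat.card H = Nat.gcd k (p - 1))
    (hx : Complex.I ^ k * (xk k p (r : ZMod p) : ℂ) ∈ K) :
    (⟨Complex.I ^ k * (xk k p (r : ZMod p) : ℂ), hx⟩ : K) ∈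
      IntermediateField.fixedField H := by
  set ζ : ℂ := Complex.exp (2 * π * Complex.I / p)
  have hζK : ζ ∈ K := hK ▸ IntermediateField.subset_adjoin ℚ _ rfl
  have hz : IsPrimitiveRoot (⟨ζ, hζK⟩ : K) p :=
    (Complex.isPrimitiveRoot_exp p (NeZero.ne p)).of_map_of_injective
      (algebraMap K ℂ).injective
  have hx_eq : (⟨_, hx⟩ : K) = ((p : K)⁻¹) ^ k * cotSum k p (r : ZMod p) ⟨ζ, hζK⟩ := by
    apply Subtype.ext
    change Complex.I ^ k * (xk k p r : ℂ) = algebraMap K ℂ (_ * _)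
    rw [I_pow_mul_xk, map_mul, map_pow, map_inv₀, map_natCast, map_cotSum]
    rfl
  rintro ⟨σ, hσ⟩
  change σ _ = _
  rw [hx_eq, map_mul, map_pow, map_inv₀, map_natCast,
    hz.algEquiv_cotSum _ (pow_eq_one_of_mem_of_card_dvd (hH ▸ Nat.gcd_dvd_left k _) hσ)]

theorem stmt4 (p k : ℕ) [NeZero p] (hp : p.Prime) (r : ℤ)
    (K : IntermediateField ℚ ℂ)
    (hK : K = IntermediateField.adjoin ℚ {Complex.exp (2 * π * Complex.I / p)})
    (H : Subgroup (K ≃ₐ[ℚ] K)) (hH : Nat.card H = Nat.gcd k (p - 1))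
    (hx : Complex.I ^ k * (xk k p (r : ZMod p) : ℂ) ∈ K) :
    (⟨Complex.I ^ k * (xk k p (r : ZMod p) : ℂ), hx⟩ : K) ∈
      IntermediateField.fixedField H :=
  stmt4_general p k r K hK H hH hx
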